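/- The map χ_{n,m} is a bijection of F_2^n if and only if m does not divide n. Moreover, if m ∤ n, then its compositional inverse is χ_{n,m}^{-1} = θ_{m,0} + θ_{m,1} + θ_{m,2} + ⋯ + θ_{m,ℓ} with ℓ = ⌊n/m⌋; explicitly, the i-th coordinate of χ_{n,m}^{-1}(x) equals x_i + Σ_{k=1}^{ℓ} x_{i+mk} · ∏_{1 ≤ j ≤ mk−1, m ∤ j} (x_{i+j} + 1). -/

import Mathlib

/-- Index `i + j` computed modulo `n`, for `i : Fin n` and `j : ℕ`. -/
def idx {n : ℕ} (i : Fin n) (j : ℕ) : Fin n :=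
  ⟨(i.val + j) % n, Nat.mod_lt _ i.pos⟩

/-- The map `θ_{m,k} : F_2^n → F_2^n`; `θ_{m,0}` is the identity map, and for `k ≥ 1`,
`(θ_{m,k}(x))_i = x_{i+mk} · ∏_{1 ≤ j ≤ mk−1, m ∤ j} (x_{i+j} + 1)` (indices mod `n`). -/
def theta (n m k : ℕ) : (Fin n → ZMod 2) → Fin n → ZMod 2 :=
  if k = 0 then id
  else fun x i =>
    x (idx i (m * k)) *
      ∏ j ∈ (Finset.Ico 1 (m * k)).filter (fun j => ¬ m ∣ j), (x (idx i j) + 1)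

/-!
Write `P_N(x)_i = ∏_{j < N, m ∤ j} (x_{i+j} + 1)`, so that `θ_k(x)_i = x_{i+mk} P_{mk}(x)_i` and
`θ_{k+1}(x)_i = P_m(x)_i · θ_k(x)_{i+m}`. Since `a (a + 1) = 0` over `F_2`, a factor `x_{i+j}`
kills any product containing `x_{i+j} + 1`. This lets one replace `χ(x)` by `x` inside
`P_m(χ(x))_i θ_k(x)_{i+m}`, and induction on `k` gives `θ_k(χ(x)) = θ_k(x) + θ_{k+1}(x)`.
Summing over `k ≤ ℓ` telescopes to `(θ_0 + ⋯ + θ_ℓ)(χ(x)) = x + θ_{ℓ+1}(x)`, and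
`θ_{ℓ+1} = 0` for `ℓ = ⌊n/m⌋` when `m ∤ n`: the index `m(ℓ+1) - n` is not a multiple of `m`
and points at the same coordinate as `m(ℓ+1)`. When `m ∣ n`, the indicator of the multiples
of `m` is a nonzero kernel element of `χ`.
-/

lemma ZMod.mul_add_one_self_eq_zero (a : ZMod 2) : a * (a + 1) = 0 := by
  revert a; decide

lemma Finset.prod_mul_eq_prod_mul {ι M : Type*} [CommMonoid M] {s : Finset ι} {f g : ι → M}
    {c : M} (h : ∀ i ∈ s, f i * c = g i * c) : (∏ i ∈ s, f i) * c = (∏ i ∈ s, g i) * c := by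
  classical
  induction s using Finset.induction_on with
  | empty => rfl
  | insert a s ha ih =>
    rw [prod_insert ha, prod_insert ha, mul_assoc, ih fun i hi => h i (mem_insert_of_mem hi),
      mul_left_comm, h a (mem_insert_self a s), mul_left_comm, mul_assoc]

def gapProd {n : ℕ} (m : ℕ) (x : Fin n → ZMod 2) (i : Fin n) (N : ℕ) : ZMod 2 :=
  ∏ j ∈ Finset.range N, if m ∣ j then 1 else x (idx i j) + 1

def chi (n m : ℕ) : (Fin n → ZMod 2) → Fin n → ZMod 2 :=
  theta n m 0 + theta n m 1

section Theta

variable {n m : ℕ}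

lemma idx_zero (i : Fin n) : idx i 0 = i := by
  simp [idx, Nat.mod_eq_of_lt i.isLt]

lemma idx_idx (i : Fin n) (a b : ℕ) : idx (idx i a) b = idx i (a + b) := by
  simp [idx, Nat.add_assoc]

lemma idx_add_self (i : Fin n) (a : ℕ) : idx i (a + n) = idx i a := by
  simp [idx, ← Nat.add_assoc]

lemma mul_gapProd_eq_zero {x : Fin n → ZMod 2} {i : Fin n} {N j : ℕ} (hj : j < N)
    (hmj : ¬ m ∣ j) : x (idx i j) * gapProd m x i N = 0 := by
  rw [gapProd, ← Finset.mul_prod_erase _ _ (Finset.mem_range.mpr hj), if_neg hmj, ← mul_assoc,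
    ZMod.mul_add_one_self_eq_zero, zero_mul]

lemma gapProd_add (x : Fin n → ZMod 2) (i : Fin n) (N : ℕ) :
    gapProd m x i (m + N) = gapProd m x i m * gapProd m x (idx i m) N := by
  simp only [gapProd, Finset.prod_range_add, idx_idx, Nat.dvd_add_right (dvd_refl m)]

lemma theta_zero : theta n m 0 = id := rfl

lemma theta_apply (k : ℕ) (x : Fin n → ZMod 2) (i : Fin n) :
    theta n m k x i = x (idx i (m * k)) * gapProd m x i (m * k) := by
  rcases Nat.eq_zero_or_pos k with rfl | hk
  · simp [theta_zero, gapProd, idx_zero]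
  · have hfilter : (Finset.Ico 1 (m * k)).filter (fun j => ¬ m ∣ j)
        = (Finset.range (m * k)).filter (fun j => ¬ m ∣ j) := by
      ext j
      simp only [Finset.mem_filter, Finset.mem_Ico, Finset.mem_range]
      constructor
      · rintro ⟨⟨-, hj⟩, hmj⟩; exact ⟨hj, hmj⟩
      · rintro ⟨hj, hmj⟩; exact ⟨⟨Nat.pos_of_ne_zero (by rintro rfl; simp at hmj), hj⟩, hmj⟩
    simp only [theta, if_neg hk.ne', hfilter, Finset.prod_filter, gapProd, ite_not]

lemma theta_succ_apply (k : ℕ) (x : Fin n → ZMod 2) (i : Fin n) :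
    theta n m (k + 1) x i = gapProd m x i m * theta n m k x (idx i m) := by
  rw [theta_apply, theta_apply, show m * (k + 1) = m + m * k by ring, gapProd_add, idx_idx]
  ring

lemma chi_apply (x : Fin n → ZMod 2) (i : Fin n) :
    chi n m x i = x i + x (idx i m) * gapProd m x i m := by
  simp [chi, theta_zero, theta_apply]

lemma chi_apply_mul_theta {s : ℕ} (hs : 0 < s) (hsm : s < m) (k : ℕ) (x : Fin n → ZMod 2)
    (i : Fin n) :
    chi n m x (idx i s) * theta n m k x (idx i m) = x (idx i s) * theta n m k x (idx i m) := by
  suffices h : x (idx i (s + m)) * gapProd m x (idx i s) m * theta n m k x (idx i m) = 0 by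
    rw [chi_apply, idx_idx, add_mul, h, add_zero]
  rcases k with _ | k
  · -- `P_m(x)_{i+s}` contains the factor `x_{i+m} + 1`
    have hx : x (idx i m) * gapProd m x (idx i s) m = 0 := by
      simpa [idx_idx, Nat.add_sub_cancel' hsm.le] using
        mul_gapProd_eq_zero (x := x) (i := idx i s) (Nat.sub_lt (by omega) hs)
          (Nat.not_dvd_of_pos_of_lt (Nat.sub_pos_of_lt hsm) (Nat.sub_lt (by omega) hs))
    rw [theta_zero, id]
    linear_combination x (idx i (s + m)) * hx
  · -- `θ_{k+1}(x)_{i+m}` contains the factor `x_{i+m+s} + 1`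
    have hx : x (idx i (s + m)) * gapProd m x (idx i m) (m * (k + 1)) = 0 := by
      simpa [idx_idx, Nat.add_comm m s] using
        mul_gapProd_eq_zero (x := x) (i := idx i m)
          (hsm.trans_le (Nat.le_mul_of_pos_right m k.succ_pos)) (Nat.not_dvd_of_pos_of_lt hs hsm)
    rw [theta_apply]
    linear_combination (gapProd m x (idx i s) m * x (idx (idx i m) (m * (k + 1)))) * hx

lemma gapProd_chi_mul_theta (k : ℕ) (x : Fin n → ZMod 2) (i : Fin n) :
    gapProd m (chi n m x) i m * theta n m k x (idx i m) =
      gapProd m x i m * theta n m k x (idx i m) := by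
  refine Finset.prod_mul_eq_prod_mul fun s hs => ?_
  split_ifs with hms
  · rfl
  · have hs0 : 0 < s := Nat.pos_of_ne_zero (by rintro rfl; exact hms (dvd_zero m))
    rw [add_one_mul, add_one_mul, chi_apply_mul_theta hs0 (Finset.mem_range.mp hs)]

lemma theta_comp_chi (k : ℕ) (x : Fin n → ZMod 2) :
    theta n m k (chi n m x) = theta n m k x + theta n m (k + 1) x := by
  induction k generalizing x with
  | zero => funext i; simp [chi, theta_zero]
  | succ k ih =>
    funext i
    rw [Pi.add_apply, theta_succ_apply, ih, Pi.add_apply, mul_add, gapProd_chi_mul_theta,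
      gapProd_chi_mul_theta, ← theta_succ_apply, ← theta_succ_apply]

lemma sum_theta_comp_chi (ℓ : ℕ) (x : Fin n → ZMod 2) :
    (∑ k ∈ Finset.range (ℓ + 1), theta n m k) (chi n m x) = x + theta n m (ℓ + 1) x := by
  induction ℓ with
  | zero => simp [theta_comp_chi, theta_zero]
  | succ ℓ ih =>
    rw [Finset.sum_range_succ, Pi.add_apply, ih, theta_comp_chi, add_assoc,
      ← add_assoc (theta n m (ℓ + 1) x), ZModModule.add_self, zero_add]

lemma theta_eq_zero_of_lt {k : ℕ} (hmn : ¬ m ∣ n) (hk : n < m * k) : theta n m k = 0 := by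
  funext x i
  have hj : m * k - n < m * k := Nat.sub_lt (by omega) i.pos
  have hmj : ¬ m ∣ m * k - n := fun h =>
    hmn (by simpa [Nat.sub_sub_self hk.le] using Nat.dvd_sub (dvd_mul_right m k) h)
  have hidx : idx i (m * k - n) = idx i (m * k) := by
    rw [← idx_add_self, Nat.sub_add_cancel hk.le]
  rw [theta_apply, ← hidx, mul_gapProd_eq_zero hj hmj, Pi.zero_apply, Pi.zero_apply]

lemma sum_theta_apply (ℓ : ℕ) (x : Fin n → ZMod 2) (i : Fin n) :
    (∑ k ∈ Finset.range (ℓ + 1), theta n m k) x i =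
      x i + ∑ k ∈ Finset.Icc 1 ℓ,
        x (idx i (m * k)) * ∏ j ∈ (Finset.Ico 1 (m * k)).filter (fun j => ¬ m ∣ j),
          (x (idx i j) + 1) := by
  rw [Finset.sum_apply, Finset.sum_apply, Finset.sum_range_succ',
    ← Finset.Ico_add_one_right_eq_Icc, Finset.sum_Ico_eq_sum_range, add_comm]
  simp [theta, add_comm 1]

lemma chi_indicator_dvd_eq_zero (hmn : m ∣ n) :
    chi n m (fun i => if m ∣ i.val then 1 else 0) = 0 := by
  funext t
  have hx : ∀ j, (fun i : Fin n => if m ∣ i.val then (1 : ZMod 2) else 0) (idx t j) =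
      if m ∣ t.val + j then 1 else 0 := fun j => by simp [idx, Nat.dvd_mod_iff hmn]
  rw [chi_apply, Pi.zero_apply, gapProd]
  simp only [hx]
  by_cases ht : m ∣ t.val
  · simp only [ht, Nat.dvd_add_right ht, dvd_refl, if_true]
    rw [Finset.prod_eq_one fun j _ => by split_ifs <;> simp_all]
    decide
  · simp [ht, Nat.dvd_add_self_right]

lemma not_injective_chi_of_dvd (hn : 0 < n) (hmn : m ∣ n) : ¬ Function.Injective (chi n m) := by
  intro hinj
  have hchi0 : chi n m 0 = 0 := funext fun i => by simp [chi_apply]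
  have h := congrFun (hinj ((chi_indicator_dvd_eq_zero hmn).trans hchi0.symm)) ⟨0, hn⟩
  simp at h

lemma leftInverse_sum_theta_chi (hm : 0 < m) (hmn : ¬ m ∣ n) :
    Function.LeftInverse (∑ k ∈ Finset.range (n / m + 1), theta n m k) (chi n m) := fun x => by
  rw [sum_theta_comp_chi, theta_eq_zero_of_lt hmn (Nat.lt_mul_div_succ n hm), Pi.zero_apply,
    add_zero]

end Theta

/-- `χ_{n,m} = θ_{m,0} + θ_{m,1}` is a bijection iff `m ∤ n`, and in that case
its compositional inverse is `θ_{m,0} + θ_{m,1} + ⋯ + θ_{m,ℓ}`, given coordinatewise by the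
stated explicit formula. -/
theorem stmt14 (n m : ℕ) (hn : 1 ≤ n) (hm : 2 ≤ m) :
    (Function.Bijective (theta n m 0 + theta n m 1) ↔ ¬ m ∣ n) ∧
    (¬ m ∣ n →
      ((theta n m 0 + theta n m 1) ∘
          (∑ k ∈ Finset.range (n / m + 1), theta n m k) = id ∧
       (∑ k ∈ Finset.range (n / m + 1), theta n m k) ∘
          (theta n m 0 + theta n m 1) = id ∧
       ∀ (x : Fin n → ZMod 2) (i : Fin n),
         (∑ k ∈ Finset.range (n / m + 1), theta n m k) x i =
           x i + ∑ k ∈ Finset.Icc 1 (n / m),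
             x (idx i (m * k)) *
               ∏ j ∈ (Finset.Ico 1 (m * k)).filter (fun j => ¬ m ∣ j),
                 (x (idx i j) + 1))) := by
  change (Function.Bijective (chi n m) ↔ _) ∧ (_ → chi n m ∘ _ = id ∧ _ ∘ chi n m = id ∧ _)
  have hleft := fun hmn => leftInverse_sum_theta_chi (n := n) (by omega : 0 < m) hmn
  have hbij : ¬ m ∣ n → Function.Bijective (chi n m) := fun hmn =>
    Finite.injective_iff_bijective.mp (hleft hmn).injective
  refine ⟨⟨fun hb hmn => not_injective_chi_of_dvd hn hmn hb.injective, hbij⟩,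
    fun hmn => ⟨?_, (hleft hmn).comp_eq_id, sum_theta_apply _⟩⟩
  exact ((hleft hmn).rightInverse_of_surjective (hbij hmn).surjective).comp_eq_id
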